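/- Let p ≥ 1 be an integer, let a_1,…,a_p be nonnegative reals, and suppose x ∈ {−1, 1}^p satisfies Σ_{i=1}^p a_i x_i = (1/2)·Σ_{i=1}^p a_i. Then G(x, 0) = p + 100p². -/

import Mathlib

/-- `θ(x, β₀) = (max{0, x + β₀} − 1)² + (max{0, −x + β₀} − 1)²`. -/
noncomputable def thetaFn (x β₀ : ℝ) : ℝ :=
  (max 0 (x + β₀) - 1) ^ 2 + (max 0 (-x + β₀) - 1) ^ 2

/-- The objective of the (ReLU) reduction instance. -/
noncomputable def reluObj {p : ℕ} (a : Fin p → ℝ) (β : Fin p → ℝ) (β₀ : ℝ) : ℝ :=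
  (max 0 (∑ i, a i * β i + β₀) - (1 / 2) * ∑ i, a i) ^ 2
  + (max 0 (2 * ∑ i, a i * β i + β₀) - ∑ i, a i) ^ 2
  + ∑ j, thetaFn (β j) β₀
  + (max 0 β₀ + 10 * p) ^ 2

/-- At a sign vector exactly one of the two ReLUs is active, and it outputs `1`. -/
theorem thetaFn_zero_of_eq_neg_one_or_eq_one {x : ℝ} (hx : x = -1 ∨ x = 1) :
    thetaFn x 0 = 1 := by
  rcases hx with rfl | rfl <;> norm_num [thetaFn]

/-- When `∑ aᵢβᵢ = ½ ∑ aᵢ ≥ 0`, both data-fitting terms vanish. -/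
theorem reluObj_zero_of_sum_eq_half {p : ℕ} {a β : Fin p → ℝ} (ha : 0 ≤ ∑ i, a i)
    (hsum : ∑ i, a i * β i = (1 / 2) * ∑ i, a i) :
    reluObj a β 0 = ∑ j, thetaFn (β j) 0 + 100 * (p : ℝ) ^ 2 := by
  have hhalf : max 0 ((1 / 2) * ∑ i, a i) = (1 / 2) * ∑ i, a i :=
    max_eq_right (by positivity)
  have hfull : max 0 (2 * ((1 / 2) * ∑ i, a i)) = ∑ i, a i := by
    rw [← mul_assoc]; norm_num [ha]
  rw [reluObj, hsum, add_zero, add_zero, hhalf, hfull, max_self]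
  ring

theorem reluObj_eq_of_pmOne_solution_general (p : ℕ)
    (a : Fin p → ℝ) (ha : ∀ i, 0 ≤ a i)
    (x : Fin p → ℝ) (hx : ∀ i, x i = -1 ∨ x i = 1)
    (hsum : ∑ i, a i * x i = (1 / 2) * ∑ i, a i) :
    reluObj a x 0 = (p : ℝ) + 100 * (p : ℝ) ^ 2 := by
  rw [reluObj_zero_of_sum_eq_half (Finset.sum_nonneg fun i _ => ha i) hsum,
    Finset.sum_congr rfl fun j _ => thetaFn_zero_of_eq_neg_one_or_eq_one (hx j)]
  simp

/-- if `a₁,…,a_p ≥ 0` and `x ∈ {−1,1}^p` satisfies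
`∑ a_i x_i = ½ ∑ a_i`, then `G(x, 0) = p + 100 p²`. -/
theorem reluObj_eq_of_pmOne_solution (p : ℕ) (hp : 1 ≤ p)
    (a : Fin p → ℝ) (ha : ∀ i, 0 ≤ a i)
    (x : Fin p → ℝ) (hx : ∀ i, x i = -1 ∨ x i = 1)
    (hsum : ∑ i, a i * x i = (1 / 2) * ∑ i, a i) :
    reluObj a x 0 = (p : ℝ) + 100 * (p : ℝ) ^ 2 :=
  reluObj_eq_of_pmOne_solution_general p a ha x hx hsum
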